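/- arXiv:2112.06994 — 3 statements merged into one kernel-verified Lean document; each statement's English description precedes it below -/
import Mathlib

section
/- Let η be a Hamming embedding of a weighted graph G, and let uv, u'v' be edges with coordinates D_η(u,v) and D_η(u',v') disjoint. Then uv and u'v' are not related by the Djoković-Winkler relation θ, i.e., [d(u,u') − d(u,v')] − [d(v,u') − d(v,v')] = 0. -/
open SimpleGraph

/-- The total weight of a walk in a weighted graph. -/
def walkWeight {V : Type*} {G : SimpleGraph V} (w : V → V → ℕ) {u v : V} (p : G.Walk u v) : ℕ :=
  (p.darts.map fun d => w d.toProd.1 d.toProd.2).sum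

/-- The shortest-path (weighted) distance between two vertices. -/
noncomputable def wdist {V : Type*} (G : SimpleGraph V) (w : V → V → ℕ) (u v : V) : ℕ :=
  sInf {n | ∃ p : G.Walk u v, walkWeight w p = n}

/-- if the coordinate sets changing across two edges are disjoint, the edges
are not θ-related: the Djoković–Winkler quantity vanishes. -/
theorem disjoint_coords_not_theta {V A : Type*} [Fintype V] [DecidableEq A] {m : ℕ}
    (G : SimpleGraph V) (w : V → V → ℕ) (η : V → Fin m → A)
    (hconn : G.Connected)
    (hsymm : ∀ u v, w u v = w v u)
    (hpos : ∀ u v, G.Adj u v → 0 < w u v)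
    (hemb : ∀ x y, wdist G w x y = hammingDist (η x) (η y))
    (u v u' v' : V) (huv : G.Adj u v) (hu'v' : G.Adj u' v')
    (hdisj : Disjoint {j : Fin m | η u j ≠ η v j} {j : Fin m | η u' j ≠ η v' j}) :
    ((wdist G w u u' : ℤ) - wdist G w u v') - ((wdist G w v u' : ℤ) - wdist G w v v') = 0 := by
  rw [hemb, hemb, hemb, hemb]
  have key : ∀ (x y : V), (hammingDist (η x) (η y) : ℤ) =
      ∑ j : Fin m, (if η x j ≠ η y j then (1 : ℤ) else 0) := by
    intro x y
    rw [hammingDist, Finset.card_filter]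
    push_cast
    rfl
  rw [key, key, key, key, ← Finset.sum_sub_distrib, ← Finset.sum_sub_distrib,
    ← Finset.sum_sub_distrib]
  apply Finset.sum_eq_zero
  intro j _
  have hj : ¬(η u j ≠ η v j ∧ η u' j ≠ η v' j) := by
    intro ⟨h1, h2⟩
    exact Set.disjoint_left.mp hdisj h1 h2
  rcases not_and_or.mp hj with h | h
  · have h : η u j = η v j := not_not.mp h
    simp [h]
  · have h : η u' j = η v' j := not_not.mp h
    simp [h]
end

section
/- Let η be a Hamming embedding of a weighted graph G and let uv, vv' be two edges sharing the endpoint v. If some coordinate j satisfies η_j(u) ≠ η_j(v) and η_j(v) ≠ η_j(v'), then uv and vv' are related by the Djoković-Winkler relation θ. -/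
open SimpleGraph

/-- two edges sharing an endpoint across both of which some common
coordinate changes are θ-related. -/
theorem shared_endpoint_theta {V A : Type*} [Fintype V] [DecidableEq A] {m : ℕ}
    (G : SimpleGraph V) (w : V → V → ℕ) (η : V → Fin m → A)
    (hconn : G.Connected)
    (hsymm : ∀ u v, w u v = w v u)
    (hpos : ∀ u v, G.Adj u v → 0 < w u v)
    (hemb : ∀ x y, wdist G w x y = hammingDist (η x) (η y))
    (u v v' : V) (huv : G.Adj u v) (hvv' : G.Adj v v')
    (j : Fin m) (h1 : η u j ≠ η v j) (h2 : η v j ≠ η v' j) :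
    ((wdist G w u v : ℤ) - wdist G w u v') - ((wdist G w v v : ℤ) - wdist G w v v') ≠ 0 := by
  classical
  have hvv : wdist G w v v = 0 := by
    rw [hemb]; simp [hammingDist_self]
  set S1 := Finset.univ.filter (fun i => η u i ≠ η v i) with hS1
  set S2 := Finset.univ.filter (fun i => η v i ≠ η v' i) with hS2
  set S3 := Finset.univ.filter (fun i => η u i ≠ η v' i) with hS3
  have hsub : S3 ⊆ S1 ∪ S2 := by
    intro i hi
    simp only [hS1, hS2, hS3, Finset.mem_filter, Finset.mem_union, Finset.mem_univ,
      true_and] at *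
    by_contra h
    push_neg at h
    exact hi (h.1.trans h.2)
  have hj : j ∈ S1 ∩ S2 := by
    simp [hS1, hS2, h1, h2]
  have hcard : S3.card < S1.card + S2.card := by
    have h1 := Finset.card_le_card hsub
    have h2 := Finset.card_union_add_card_inter S1 S2
    have h3 : 0 < (S1 ∩ S2).card := Finset.card_pos.mpr ⟨j, hj⟩
    omega
  have key : hammingDist (η u) (η v') < hammingDist (η u) (η v) + hammingDist (η v) (η v') := by
    simpa [hammingDist, hS1, hS2, hS3] using hcard
  have ineq : wdist G w u v' < wdist G w u v + wdist G w v v' := by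
    rw [hemb, hemb, hemb]; exact key
  omega
end

section
/- Let η be a Hamming embedding of a weighted graph G. For any edges uv and u'v' of G, and any coordinates j ∈ D_η(u,v), j' ∈ D_η(u',v'): uv θ̂ u'v' if and only if j γ̂ j', where θ̂ is the transitive closure of the Djoković-Winkler relation on edges and γ̂ is the transitive closure of the relation γ on coordinates. -/
open SimpleGraph

/-- The Djoković–Winkler relation on (oriented) edges, expressed via the shortest-path
metric `d`: edges `uv` and `ab` are related iff `[d(u,a) − d(u,b)] − [d(v,a) − d(v,b)] ≠ 0`. -/
def theta {V : Type*} (d : V → V → ℕ) (e f : V × V) : Prop :=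
  ((d e.1 f.1 : ℤ) - d e.1 f.2) - ((d e.2 f.1 : ℤ) - d e.2 f.2) ≠ 0
/-- The relation γ on coordinates of a Hamming embedding: two coordinates are related iff
their digits both change across some edge of the graph. -/
def gammaRel {V A : Type*} {m : ℕ} (G : SimpleGraph V) (η : V → Fin m → A)
    (j j' : Fin m) : Prop :=
  ∃ u v, G.Adj u v ∧ η u j ≠ η v j ∧ η u j' ≠ η v j'

/-- The Djoković–Winkler relation restricted to edges of `G`. -/
def thetaE {V : Type*} (G : SimpleGraph V) (d : V → V → ℕ) (e f : V × V) : Prop :=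
  G.Adj e.1 e.2 ∧ G.Adj f.1 f.2 ∧ theta d e f

set_option linter.unusedSectionVars false
set_option linter.unusedVariables false

section Helpers

variable {V A : Type*} [Fintype V] [DecidableEq A] {m : ℕ}
variable {G : SimpleGraph V} {w : V → V → ℕ} {η : V → Fin m → A}

lemma walkWeight_cons {u z a : V} (h : G.Adj u z) (q : G.Walk z a) :
    walkWeight w (Walk.cons h q) = w u z + walkWeight w q := by
  simp [walkWeight]

lemma walkWeight_append {x y z : V} (p : G.Walk x y) (q : G.Walk y z) :
    walkWeight w (p.append q) = walkWeight w p + walkWeight w q := by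
  simp [walkWeight, Walk.darts_append]

/-- number of darts of a walk whose η-digits differ at coordinate `k` -/
def chg (η : V → Fin m → A) (k : Fin m) {x y : V} (p : G.Walk x y) : ℕ :=
  (p.darts.map fun d => if η d.toProd.1 k ≠ η d.toProd.2 k then 1 else 0).sum

lemma chg_cons (k : Fin m) {u z a : V} (h : G.Adj u z) (q : G.Walk z a) :
    chg η k (Walk.cons h q) = (if η u k ≠ η z k then 1 else 0) + chg η k q := by
  simp [chg]

lemma chg_append (k : Fin m) {x y z : V} (p : G.Walk x y) (q : G.Walk y z) :
    chg η k (p.append q) = chg η k p + chg η k q := by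
  simp [chg, Walk.darts_append]

lemma hammingDist_eq_sum (x y : Fin m → A) :
    hammingDist x y = ∑ k, if x k ≠ y k then 1 else 0 := by
  simp [hammingDist, Finset.card_filter]

lemma sum_chg {x y : V} (p : G.Walk x y) :
    ∑ k, chg η k p
      = (p.darts.map fun d => hammingDist (η d.toProd.1) (η d.toProd.2)).sum := by
  induction p with
  | nil => simp [chg]
  | cons h q ih =>
    simp only [chg_cons, Finset.sum_add_distrib, ih, Walk.darts_cons, List.map_cons,
      List.sum_cons, hammingDist_eq_sum]

lemma ind_le_chg (k : Fin m) {x y : V} (p : G.Walk x y) :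
    (if η x k ≠ η y k then 1 else 0) ≤ chg η k p := by
  induction p with
  | nil => simp
  | @cons u z a h q ih =>
    rw [chg_cons]
    rcases eq_or_ne (η u k) (η z k) with h1 | h1
    · rw [h1]; simpa using ih
    · rw [if_pos h1]
      have : (if η u k ≠ η a k then 1 else 0) ≤ 1 := by split <;> simp
      omega

lemma wdist_le_walkWeight {x y : V} (p : G.Walk x y) :
    wdist G w x y ≤ walkWeight w p := Nat.sInf_le ⟨p, rfl⟩

lemma wdist_adj_le {u v : V} (h : G.Adj u v) : wdist G w u v ≤ w u v := by
  have h2 : walkWeight w (Walk.cons h Walk.nil) = w u v := by simp [walkWeight]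
  exact h2 ▸ wdist_le_walkWeight _

lemma exists_sw (hconn : G.Connected) (x y : V) :
    ∃ p : G.Walk x y, walkWeight w p = wdist G w x y := by
  have hne : {n | ∃ p : G.Walk x y, walkWeight w p = n}.Nonempty := by
    obtain ⟨p⟩ := hconn.preconnected x y
    exact ⟨walkWeight w p, p, rfl⟩
  exact Nat.sInf_mem hne

variable (hemb : ∀ x y, wdist G w x y = hammingDist (η x) (η y))
include hemb

lemma wdist_tri (x y z : V) : wdist G w x z ≤ wdist G w x y + wdist G w y z := by
  rw [hemb, hemb, hemb]; exact hammingDist_triangle _ _ _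

lemma wdist_self (x : V) : wdist G w x x = 0 := by
  rw [hemb]; exact hammingDist_self _

lemma sum_hamming_le_walkWeight {x y : V} (p : G.Walk x y) :
    (p.darts.map fun d => hammingDist (η d.toProd.1) (η d.toProd.2)).sum
      ≤ walkWeight w p := by
  unfold walkWeight
  refine List.sum_le_sum fun d _ => ?_
  rw [← hemb]
  exact wdist_adj_le d.adj

lemma shortest_chg {x y : V} (p : G.Walk x y) (hp : walkWeight w p = wdist G w x y)
    (k : Fin m) : chg η k p = if η x k ≠ η y k then 1 else 0 := by
  have h1 : ∑ k, chg η k p ≤ ∑ k, (if η x k ≠ η y k then 1 else 0) := by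
    rw [sum_chg, ← hammingDist_eq_sum, ← hemb, ← hp]
    exact sum_hamming_le_walkWeight hemb p
  have h2 : ∀ k ∈ Finset.univ, (if η x k ≠ η y k then 1 else 0) ≤ chg η k p :=
    fun k _ => ind_le_chg k p
  have h3 := (Finset.sum_eq_sum_iff_of_le h2).mp
    (le_antisymm (Finset.sum_le_sum h2) h1)
  exact (h3 k (Finset.mem_univ k)).symm

lemma strict_tri (hconn : G.Connected) {k : Fin m} {p q r : V}
    (h1 : η p k ≠ η q k) (h2 : η q k ≠ η r k) :
    wdist G w p r < wdist G w p q + wdist G w q r := by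
  rcases (wdist_tri hemb p q r).lt_or_eq with h | h
  · exact h
  exfalso
  obtain ⟨P, hP⟩ := exists_sw (w := w) hconn p q
  obtain ⟨Q, hQ⟩ := exists_sw (w := w) hconn q r
  have hW : walkWeight w (P.append Q) = wdist G w p r := by
    rw [walkWeight_append, hP, hQ, h]
  have hc := shortest_chg hemb (P.append Q) hW k
  rw [chg_append] at hc
  have hcP := ind_le_chg (η := η) k P
  have hcQ := ind_le_chg (η := η) k Q
  rw [if_pos h1] at hcP
  rw [if_pos h2] at hcQ
  have : (if η p k ≠ η r k then 1 else 0) ≤ 1 := by split <;> simp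
  omega

lemma extract_aux (hconn : G.Connected) {k : Fin m} {a : V} :
    ∀ {u : V} (p : G.Walk u a), walkWeight w p = wdist G w u a → η u k ≠ η a k →
    ∃ x y, G.Adj x y ∧ η x k = η u k ∧ η y k = η a k ∧
      wdist G w u a = wdist G w u x + wdist G w x a ∧
      wdist G w x a = wdist G w x y + wdist G w y a := by
  intro u p
  induction p with
  | nil => intro _ hne; exact absurd rfl hne
  | @cons u z a h q ih =>
    intro hp hne
    have e1 : wdist G w u z ≤ w u z := wdist_adj_le h
    have e2 : wdist G w z a ≤ walkWeight w q := wdist_le_walkWeight q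
    have e3 : wdist G w u a ≤ wdist G w u z + wdist G w z a := wdist_tri hemb _ _ _
    have hp' : walkWeight w (Walk.cons h q) = w u z + walkWeight w q := walkWeight_cons h q
    have hq : walkWeight w q = wdist G w z a := by omega
    have hsum : wdist G w u a = wdist G w u z + wdist G w z a := by omega
    by_cases hcase : η u k = η z k
    · have hz : η z k ≠ η a k := by rw [← hcase]; exact hne
      obtain ⟨x, y, hadj, hx, hy, hA, hB⟩ := ih hq hz
      refine ⟨x, y, hadj, hx.trans hcase.symm, hy, ?_, hB⟩
      have t1 : wdist G w u x ≤ wdist G w u z + wdist G w z x := wdist_tri hemb _ _ _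
      have t2 : wdist G w u a ≤ wdist G w u x + wdist G w x a := wdist_tri hemb _ _ _
      omega
    · have hc := shortest_chg hemb (Walk.cons h q) hp k
      rw [chg_cons, if_pos hcase, if_pos hne] at hc
      have hq0 : chg η k q = 0 := by omega
      have hza : η z k = η a k := by
        by_contra hza
        have := ind_le_chg (η := η) k q
        rw [if_pos hza] at this
        omega
      refine ⟨u, z, h, rfl, hza, ?_, hsum⟩
      rw [wdist_self hemb]
      omega

lemma extract (hconn : G.Connected) {k : Fin m} {u a : V} (hne : η u k ≠ η a k) :
    ∃ x y, G.Adj x y ∧ η x k = η u k ∧ η y k = η a k ∧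
      wdist G w u a = wdist G w u x + wdist G w x a ∧
      wdist G w x a = wdist G w x y + wdist G w y a := by
  obtain ⟨p, hp⟩ := exists_sw (w := w) hconn u a
  exact extract_aux hemb hconn p hp hne



variable (hconn : G.Connected)
include hconn

lemma core {u v a b : V} {k : Fin m} (huv : G.Adj u v) (hab : G.Adj a b)
    (he : η u k ≠ η v k) (hf : η a k ≠ η b k) (hua : η u k ≠ η a k) :
    ∃ x y : V, thetaE G (wdist G w) (u, v) (x, y) ∧ thetaE G (wdist G w) (x, y) (a, b) := by
  obtain ⟨x, y, hadj, hx, hy, hA, hB⟩ := extract hemb hconn hua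
  have hxy : η x k ≠ η y k := by rw [hx, hy]; exact hua
  have hvx : η v k ≠ η x k := by rw [hx]; exact he.symm
  have T2a := strict_tri hemb hconn hvx hxy
  have hUY : wdist G w u y = wdist G w u x + wdist G w x y := by
    have t1 : wdist G w u y ≤ wdist G w u x + wdist G w x y := wdist_tri hemb _ _ _
    have t2 : wdist G w u a ≤ wdist G w u y + wdist G w y a := wdist_tri hemb _ _ _
    omega
  have theta1 : theta (wdist G w) (u, v) (x, y) := by
    show ((wdist G w u x : ℤ) - wdist G w u y) - ((wdist G w v x : ℤ) - wdist G w v y) ≠ 0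
    omega
  have hyb : η y k ≠ η b k := by rw [hy]; exact hf
  have T2b := strict_tri hemb hconn hxy hyb
  have theta2 : theta (wdist G w) (x, y) (a, b) := by
    show ((wdist G w x a : ℤ) - wdist G w x b) - ((wdist G w y a : ℤ) - wdist G w y b) ≠ 0
    omega
  exact ⟨x, y, ⟨huv, hadj, theta1⟩, ⟨hadj, hab, theta2⟩⟩

lemma lemB {u v a b : V} (k : Fin m) (huv : G.Adj u v) (hab : G.Adj a b)
    (he : η u k ≠ η v k) (hf : η a k ≠ η b k) :
    Relation.TransGen (thetaE G (wdist G w)) (u, v) (a, b) := by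
  by_cases hua : η u k = η a k
  · have hub : η u k ≠ η b k := by rw [hua]; exact hf
    obtain ⟨x, y, h1, h2⟩ := core hemb hconn huv hab.symm he hf.symm hub
    have h2' : thetaE G (wdist G w) (x, y) (a, b) := by
      refine ⟨h2.1, hab, ?_⟩
      have h3 := h2.2.2
      simp only [theta] at h3 ⊢
      omega
    exact (Relation.TransGen.single h1).tail h2'
  · obtain ⟨x, y, h1, h2⟩ := core hemb hconn huv hab he hf hua
    exact (Relation.TransGen.single h1).tail h2

omit hconn

lemma shared {e f : V × V} (ht : theta (wdist G w) e f) :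
    ∃ k, η e.1 k ≠ η e.2 k ∧ η f.1 k ≠ η f.2 k := by
  by_contra hcon
  push_neg at hcon
  apply ht
  have hd : ∀ p q : V, (wdist G w p q : ℤ) = ∑ k, (if η p k ≠ η q k then (1 : ℤ) else 0) := by
    intro p q
    rw [hemb, hammingDist_eq_sum, Nat.cast_sum]
    exact Finset.sum_congr rfl fun k _ => by split <;> simp
  rw [hd, hd, hd, hd, ← Finset.sum_sub_distrib, ← Finset.sum_sub_distrib,
    ← Finset.sum_sub_distrib]
  apply Finset.sum_eq_zero
  intro k _
  by_cases h : η e.1 k = η e.2 k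
  · rw [h]; ring
  · rw [hcon k h]; ring

end Helpers

/-- for edges `uv`, `u'v'` and coordinates `j ∈ D_η(u,v)`, `j' ∈ D_η(u',v')`,
`uv θ̂ u'v'` iff `j γ̂ j'`. -/
theorem thetaHat_iff_gammaHat {V A : Type*} [Fintype V] [DecidableEq A] {m : ℕ}
    (G : SimpleGraph V) (w : V → V → ℕ) (η : V → Fin m → A)
    (hconn : G.Connected)
    (hsymm : ∀ u v, w u v = w v u)
    (hpos : ∀ u v, G.Adj u v → 0 < w u v)
    (hemb : ∀ x y, wdist G w x y = hammingDist (η x) (η y))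
    (u v u' v' : V) (huv : G.Adj u v) (hu'v' : G.Adj u' v')
    (j j' : Fin m) (hj : η u j ≠ η v j) (hj' : η u' j' ≠ η v' j') :
    Relation.TransGen (thetaE G (wdist G w)) (u, v) (u', v') ↔
      Relation.TransGen (gammaRel G η) j j' := by

  constructor
  · intro h
    have key : ∀ (ef : V × V), Relation.TransGen (thetaE G (wdist G w)) (u, v) ef →
        ∀ j'' : Fin m, η ef.1 j'' ≠ η ef.2 j'' →
        Relation.TransGen (gammaRel G η) j j'' := by
      intro ef h
      induction h with
      | single hstep =>
        intro j'' hj''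
        obtain ⟨k, hk1, hk2⟩ := shared hemb hstep.2.2
        exact (Relation.TransGen.single ⟨u, v, huv, hj, hk1⟩).tail ⟨_, _, hstep.2.1, hk2, hj''⟩
      | tail hTG hstep ih =>
        intro j'' hj''
        obtain ⟨k, hk1, hk2⟩ := shared hemb hstep.2.2
        exact (ih k hk1).tail ⟨_, _, hstep.2.1, hk2, hj''⟩
    exact key (u', v') h j' hj'
  · intro h
    have key : ∀ (j'' : Fin m), Relation.TransGen (gammaRel G η) j j'' →
        ∀ a b : V, G.Adj a b → η a j'' ≠ η b j'' →
        Relation.TransGen (thetaE G (wdist G w)) (u, v) (a, b) := by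
      intro j'' h
      induction h with
      | single hstep =>
        intro a b hab hj''
        obtain ⟨p, q, hpq, hpj, hpj''⟩ := hstep
        exact (lemB hemb hconn j huv hpq hj hpj).trans
          (lemB hemb hconn _ hpq hab hpj'' hj'')
      | tail hTG hstep ih =>
        intro a b hab hj''
        obtain ⟨p, q, hpq, hpk, hpj''⟩ := hstep
        exact (ih p q hpq hpk).trans (lemB hemb hconn _ hpq hab hpj'' hj'')
    exact key j' h u' v' hu'v' hj'
end
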